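/- arXiv:1709.09858 — 6 statements merged into one kernel-verified Lean document; each statement's English description precedes it below -/
import Mathlib

section
/- Let 0 < r < s. For all probability measures φ and ψ on ℝ with characteristic functions φ̂ and ψ̂, if d_s(φ,ψ) = sup_{ξ≠0} |φ̂(ξ) − ψ̂(ξ)|/|ξ|^s is finite, then D_r(φ,ψ) = ∫_ℝ |φ̂(ξ) − ψ̂(ξ)|/|ξ|^{1+r} dξ satisfies D_r(φ,ψ) ≤ c(r,s)·d_s(φ,ψ)^{r/s}, where c(r,s) = 2^{2−r/s}·s/(r(s−r)). -/
open MeasureTheory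

/-- The characteristic function (Fourier transform) of a measure on `ℝ`,
`φ̂(ξ) = ∫ e^{-iξv} dφ(v)`. -/
noncomputable def charFn (μ : Measure ℝ) (ξ : ℝ) : ℂ :=
  ∫ v, Complex.exp (-(ξ * v) * Complex.I) ∂μ

/-- The Fourier-based metric `d_s(φ,ψ) = sup_{ξ ≠ 0} |φ̂(ξ) - ψ̂(ξ)| / |ξ|^s`. -/
noncomputable def dFourier (s : ℝ) (φ ψ : Measure ℝ) : ℝ :=
  ⨆ ξ : {ξ : ℝ // ξ ≠ 0}, ‖charFn φ ξ.1 - charFn ψ ξ.1‖ / |ξ.1| ^ s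

/-- The Fourier-based metric `D_s(φ,ψ) = ∫_ℝ |φ̂(ξ) - ψ̂(ξ)| / |ξ|^{1+s} dξ`. -/
noncomputable def DFourier (s : ℝ) (φ ψ : Measure ℝ) : ℝ :=
  ∫ ξ : ℝ, ‖charFn φ ξ - charFn ψ ξ‖ / |ξ| ^ (1 + s)

/-!
With `u = ‖φ̂ - ψ̂‖` we have `u ≤ 2` everywhere and `u ξ ≤ d_s(φ,ψ) |ξ|^s` for `ξ ≠ 0`. Splitting
`∫ u ξ / |ξ|^(1+r)` at `|ξ| = R`, the second bound on `|ξ| ≤ R` and the first on `|ξ| > R` give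
`2 (d R^(s-r) / (s-r) + 2 R^(-r) / r)`; the two terms balance for `d R^s = 2`, and that choice of
`R` yields `c(r,s) d^(r/s)`. When `d = 0` the integrand vanishes almost everywhere.
-/

open Set

lemma charFn_eq_charFun_neg (μ : Measure ℝ) (ξ : ℝ) : charFn μ ξ = charFun μ (-ξ) := by
  rw [charFun_apply_real, charFn]
  congr with v
  push_cast
  ring_nf

lemma norm_charFn_le_one (μ : Measure ℝ) [IsProbabilityMeasure μ] (ξ : ℝ) :
    ‖charFn μ ξ‖ ≤ 1 := by
  rw [charFn_eq_charFun_neg]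
  exact norm_charFun_le_one _

lemma norm_charFn_sub_le_two (φ ψ : Measure ℝ) [IsProbabilityMeasure φ]
    [IsProbabilityMeasure ψ] (ξ : ℝ) : ‖charFn φ ξ - charFn ψ ξ‖ ≤ 2 :=
  (norm_sub_le _ _).trans <| by linarith [norm_charFn_le_one φ ξ, norm_charFn_le_one ψ ξ]

lemma dFourier_nonneg (s : ℝ) (φ ψ : Measure ℝ) : 0 ≤ dFourier s φ ψ :=
  Real.iSup_nonneg fun _ => by positivity

lemma norm_charFn_sub_le_dFourier_mul {s : ℝ} {φ ψ : Measure ℝ}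
    (hfin : BddAbove (Set.range fun ξ : {ξ : ℝ // ξ ≠ 0} =>
      ‖charFn φ ξ.1 - charFn ψ ξ.1‖ / |ξ.1| ^ s)) {ξ : ℝ} (hξ : ξ ≠ 0) :
    ‖charFn φ ξ - charFn ψ ξ‖ ≤ dFourier s φ ψ * |ξ| ^ s :=
  (div_le_iff₀ (Real.rpow_pos_of_pos (abs_pos.mpr hξ) s)).mp (le_ciSup hfin ⟨ξ, hξ⟩)

lemma integrable_comp_abs {G : ℝ → ℝ} (h : IntegrableOn G (Ioi 0)) :
    Integrable fun x => G |x| := by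
  have hIoi : IntegrableOn (fun x => G |x|) (Ioi 0) :=
    h.congr_fun (fun x hx => by rw [abs_of_pos hx]) measurableSet_Ioi
  have hIic : IntegrableOn (fun x => G |x|) (Iic 0) := by
    have hneg : MeasurableEmbedding fun x : ℝ => -x := (Homeomorph.neg ℝ).measurableEmbedding
    rw [← Measure.map_neg_eq_self (volume : Measure ℝ), hneg.integrableOn_map_iff]
    simp_rw [Function.comp_def, abs_neg, neg_preimage, neg_Iic, neg_zero]
    exact Iff.mpr integrableOn_Ici_iff_integrableOn_Ioi hIoi
  rw [← integrableOn_univ, ← Iic_union_Ioi (a := (0 : ℝ))]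
  exact hIic.union hIoi

section PiecewisePower

variable {a b R : ℝ} (c C : ℝ)

lemma integrableOn_Ioi_piecewise_rpow (ha : -1 < a) (hb : b < -1) (hR : 0 < R) :
    IntegrableOn (fun t => if t ≤ R then c * t ^ a else C * t ^ b) (Ioi 0) := by
  rw [← Ioc_union_Ioi_eq_Ioi hR.le]
  refine IntegrableOn.union ?_ ?_
  · have hIoc : IntegrableOn (fun t : ℝ => t ^ a) (Ioc 0 R) :=
      ((intervalIntegral.integrableOn_Ioo_rpow_iff hR).mpr ha).congr_set_ae Ioo_ae_eq_Ioc.symm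
    exact IntegrableOn.congr_fun (hIoc.const_mul c) (fun t ht => by simp [ht.2]) measurableSet_Ioc
  · exact IntegrableOn.congr_fun ((integrableOn_Ioi_rpow_of_lt hb hR).const_mul C)
      (fun t ht => by simp [not_le.mpr (mem_Ioi.mp ht)]) measurableSet_Ioi

lemma integral_Ioi_piecewise_rpow (ha : -1 < a) (hb : b < -1) (hR : 0 < R) :
    ∫ t in Ioi 0, (if t ≤ R then c * t ^ a else C * t ^ b) =
      c * R ^ (a + 1) / (a + 1) - C * R ^ (b + 1) / (b + 1) := by
  have hint := integrableOn_Ioi_piecewise_rpow c C ha hb hR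
  rw [← Ioc_union_Ioi_eq_Ioi hR.le] at hint ⊢
  rw [setIntegral_union (Ioc_disjoint_Ioi le_rfl) measurableSet_Ioi
      (hint.mono_set subset_union_left) (hint.mono_set subset_union_right),
    setIntegral_congr_fun measurableSet_Ioc (g := fun t => c * t ^ a)
      (fun t ht => by simp [ht.2]),
    setIntegral_congr_fun measurableSet_Ioi (g := fun t => C * t ^ b)
      (fun t ht => by simp [not_le.mpr (mem_Ioi.mp ht)]),
    ← intervalIntegral.integral_of_le hR.le, intervalIntegral.integral_const_mul,
    integral_rpow (Or.inl ha), integral_const_mul, integral_Ioi_rpow_of_lt hb hR,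
    Real.zero_rpow (by linarith)]
  ring

end PiecewisePower

section Interpolation

variable {u : ℝ → ℝ} {r s M d : ℝ}

lemma integral_div_abs_rpow_le_split (hr : 0 < r) (hrs : r < s) {R : ℝ} (hR : 0 < R)
    (hu : ∀ ξ, 0 ≤ u ξ) (huM : ∀ ξ, u ξ ≤ M) (hud : ∀ ξ ≠ 0, u ξ ≤ d * |ξ| ^ s) :
    ∫ ξ, u ξ / |ξ| ^ (1 + r) ≤ 2 * (d * R ^ (s - r) / (s - r) + M * R ^ (-r) / r) := by
  set G : ℝ → ℝ := fun t => if t ≤ R then d * t ^ (s - 1 - r) else M * t ^ (-(1 + r))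
  have ha : -1 < s - 1 - r := by linarith
  have hb : -(1 + r) < -1 := by linarith
  have hG : ∀ ξ ≠ 0, u ξ / |ξ| ^ (1 + r) ≤ G |ξ| := by
    intro ξ hξ
    have hξ' : 0 < |ξ| := abs_pos.mpr hξ
    by_cases hcase : |ξ| ≤ R
    · calc u ξ / |ξ| ^ (1 + r) ≤ d * |ξ| ^ s / |ξ| ^ (1 + r) := by gcongr; exact hud ξ hξ
        _ = G |ξ| := by
          simp only [G, if_pos hcase]
          rw [mul_div_assoc, ← Real.rpow_sub hξ']
          ring_nf
    · calc u ξ / |ξ| ^ (1 + r) ≤ M / |ξ| ^ (1 + r) := by gcongr; exact huM ξ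
        _ = G |ξ| := by simp only [G, if_neg hcase]; rw [Real.rpow_neg hξ'.le, div_eq_mul_inv]
  have hGint := integrableOn_Ioi_piecewise_rpow d M ha hb hR
  calc ∫ ξ, u ξ / |ξ| ^ (1 + r) ≤ ∫ ξ, G |ξ| :=
        integral_mono_of_nonneg (Filter.Eventually.of_forall fun ξ => by have := hu ξ; positivity)
          (integrable_comp_abs hGint)
          ((Measure.ae_ne volume 0).mono fun ξ hξ => hG ξ hξ)
    _ = 2 * (d * R ^ (s - r) / (s - r) + M * R ^ (-r) / r) := by
      rw [integral_comp_abs, integral_Ioi_piecewise_rpow d M ha hb hR,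
        show s - 1 - r + 1 = s - r by ring, show -(1 + r) + 1 = -r by ring]
      field_simp
      ring

lemma integral_div_abs_rpow_le (hr : 0 < r) (hrs : r < s) (hM : 0 < M) (hd : 0 ≤ d)
    (hu : ∀ ξ, 0 ≤ u ξ) (huM : ∀ ξ, u ξ ≤ M) (hud : ∀ ξ ≠ 0, u ξ ≤ d * |ξ| ^ s) :
    ∫ ξ, u ξ / |ξ| ^ (1 + r) ≤ 2 * M ^ (1 - r / s) * (s / (r * (s - r))) * d ^ (r / s) := by
  have hs : 0 < s := hr.trans hrs
  rcases hd.eq_or_lt with rfl | hd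
  · have hzero : ∀ᵐ ξ : ℝ, u ξ / |ξ| ^ (1 + r) = 0 :=
      (Measure.ae_ne volume 0).mono fun ξ hξ => by
        rw [le_antisymm (by simpa using hud ξ hξ) (hu ξ), zero_div]
    rw [integral_eq_zero_of_ae hzero, Real.zero_rpow (by positivity), mul_zero]
  set R := (M / d) ^ (1 / s)
  have hR : 0 < R := by positivity
  have hRs : R ^ s = M / d := by
    rw [← Real.rpow_mul (by positivity), one_div_mul_cancel hs.ne', Real.rpow_one]
  have hRr : R ^ (-r) = d ^ (r / s) / M ^ (r / s) := by
    rw [← Real.rpow_mul (by positivity), show 1 / s * -r = -(r / s) by ring,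
      Real.div_rpow hM.le hd.le, Real.rpow_neg hM.le, Real.rpow_neg hd.le, inv_div_inv]
  have hRsr : d * R ^ (s - r) = M * R ^ (-r) := by
    rw [sub_eq_add_neg, Real.rpow_add hR, hRs]
    field_simp
  have hMr : M ^ (1 - r / s) = M / M ^ (r / s) := by
    rw [Real.rpow_sub hM, Real.rpow_one]
  refine (integral_div_abs_rpow_le_split hr hrs hR hu huM hud).trans_eq ?_
  rw [hRsr, hRr, hMr]
  have : 0 < M ^ (r / s) := by positivity
  have : 0 < s - r := by linarith
  field_simp
  ring

end Interpolation

theorem stmt_0 (r s : ℝ) (hr : 0 < r) (hrs : r < s)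
    (φ ψ : Measure ℝ) [IsProbabilityMeasure φ] [IsProbabilityMeasure ψ]
    (hfin : BddAbove (Set.range fun ξ : {ξ : ℝ // ξ ≠ 0} =>
      ‖charFn φ ξ.1 - charFn ψ ξ.1‖ / |ξ.1| ^ s)) :
    DFourier r φ ψ ≤
      2 ^ (2 - r / s) * (s / (r * (s - r))) * dFourier s φ ψ ^ (r / s) := by
  have h2 : (2 : ℝ) ^ (2 - r / s) = 2 * 2 ^ (1 - r / s) := by
    rw [show 2 - r / s = 1 + (1 - r / s) by ring, Real.rpow_add two_pos, Real.rpow_one]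
  rw [h2]
  exact integral_div_abs_rpow_le hr hrs two_pos (dFourier_nonneg s φ ψ)
    (fun _ => norm_nonneg _) (norm_charFn_sub_le_two φ ψ)
    fun _ => norm_charFn_sub_le_dFourier_mul hfin
end

section
/- Let λ, σ > 0 and μ = 1 + 2λ/σ. Then for every v > 0, the steady state f∞ satisfies the first-order identity (σ/2)·(d/dv)(v² f∞(v)) + λ(v − 1) f∞(v) = 0; consequently f∞ is a stationary solution of the Fokker–Planck equation, i.e. (σ/2)·(d²/dv²)(v² f∞(v)) + λ·(d/dv)((v − 1) f∞(v)) = 0 for all v > 0. -/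
open MeasureTheory

/-- The steady state `f∞(v) = ((μ-1)^μ / Γ(μ)) e^{-(μ-1)/v} / v^{1+μ}` for `v > 0`,
extended by `0` for `v ≤ 0`. -/
noncomputable def fSt (μ : ℝ) (v : ℝ) : ℝ :=
  if 0 < v then (μ - 1) ^ μ / Real.Gamma μ * (Real.exp (-(μ - 1) / v) / v ^ (1 + μ))
  else 0

/-!
On `(0, ∞)` the logarithmic derivative of `f∞` is `(μ - 1) / v² - (1 + μ) / v`, so
`(v² f∞)' = -(μ - 1) (v - 1) f∞`, and `σ (μ - 1) / 2 = λ` turns this into the zero-flux identity.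
Since that identity holds on the open set `(0, ∞)`, it can be differentiated once more, which gives
the stationary Fokker–Planck equation without computing any second derivative of `f∞`.
-/

open Filter Topology Real

lemma fSt_eventuallyEq (μ v : ℝ) (hv : 0 < v) :
    fSt μ =ᶠ[𝓝 v] fun w => (μ - 1) ^ μ / Gamma μ * (exp (-(μ - 1) / w) * w ^ (-(1 + μ))) := by
  filter_upwards [Ioi_mem_nhds hv] with w (hw : 0 < w)
  rw [fSt, if_pos hw, rpow_neg hw.le, ← div_eq_mul_inv]

lemma hasDerivAt_fSt (μ v : ℝ) (hv : 0 < v) :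
    HasDerivAt (fSt μ) (((μ - 1) / v ^ 2 - (1 + μ) / v) * fSt μ v) v := by
  have hexp : HasDerivAt (fun w => exp (-(μ - 1) / w))
      (exp (-(μ - 1) / v) * ((μ - 1) / v ^ 2)) v := by
    have := ((hasDerivAt_inv hv.ne').const_mul (-(μ - 1))).exp
    convert this using 1
    · ext w; rw [div_eq_mul_inv]
    · simp only [div_eq_mul_inv]
      ring
  have hpow : HasDerivAt (fun w : ℝ => w ^ (-(1 + μ))) (-(1 + μ) * v ^ (-(1 + μ) - 1)) v :=
    hasDerivAt_rpow_const (Or.inl hv.ne')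
  refine (((hexp.mul hpow).const_mul _).congr_of_eventuallyEq
    (fSt_eventuallyEq μ v hv)).congr_deriv ?_
  rw [(fSt_eventuallyEq μ v hv).eq_of_nhds, rpow_sub hv, rpow_one]
  field_simp
  ring

lemma hasDerivAt_sq_mul_fSt (μ v : ℝ) (hv : 0 < v) :
    HasDerivAt (fun w => w ^ 2 * fSt μ w) (-(μ - 1) * ((v - 1) * fSt μ v)) v := by
  refine ((hasDerivAt_pow 2 v).mul (hasDerivAt_fSt μ v hv)).congr_deriv ?_
  field_simp
  ring

lemma deriv_deriv_sq_mul_fSt (μ v : ℝ) (hv : 0 < v) :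
    deriv (deriv fun w => w ^ 2 * fSt μ w) v
      = -(μ - 1) * deriv (fun w => (w - 1) * fSt μ w) v := by
  have hflux : deriv (fun w => w ^ 2 * fSt μ w) =ᶠ[𝓝 v]
      fun w => -(μ - 1) * ((w - 1) * fSt μ w) := by
    filter_upwards [Ioi_mem_nhds hv] with w hw
    exact (hasDerivAt_sq_mul_fSt μ w hw).deriv
  rw [hflux.deriv_eq, deriv_const_mul_field']

theorem stmt_3_general (lam sig : ℝ) (hsig : 0 < sig)
    (μ : ℝ) (hmu : μ = 1 + 2 * lam / sig) :
    ∀ v : ℝ, 0 < v →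
      (sig / 2 * deriv (fun w => w ^ 2 * fSt μ w) v + lam * (v - 1) * fSt μ v = 0) ∧
      (sig / 2 * deriv (deriv (fun w => w ^ 2 * fSt μ w)) v
        + lam * deriv (fun w => (w - 1) * fSt μ w) v = 0) := by
  have hdrift : sig / 2 * (μ - 1) = lam := by
    rw [hmu]
    field_simp
    ring
  intro v hv
  rw [(hasDerivAt_sq_mul_fSt μ v hv).deriv, deriv_deriv_sq_mul_fSt μ v hv]
  constructor
  · linear_combination (-(v - 1) * fSt μ v) * hdrift
  · linear_combination (-deriv (fun w => (w - 1) * fSt μ w) v) * hdrift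

theorem stmt_3 (lam sig : ℝ) (hlam : 0 < lam) (hsig : 0 < sig)
    (μ : ℝ) (hmu : μ = 1 + 2 * lam / sig) :
    ∀ v : ℝ, 0 < v →
      (sig / 2 * deriv (fun w => w ^ 2 * fSt μ w) v + lam * (v - 1) * fSt μ v = 0) ∧
      (sig / 2 * deriv (deriv (fun w => w ^ 2 * fSt μ w)) v
        + lam * deriv (fun w => (w - 1) * fSt μ w) v = 0) :=
  stmt_3_general lam sig hsig μ hmu
end

section
/- Let λ, σ > 0 and μ = 1 + 2λ/σ. For every real r ≥ 0, the moment ∫_ℝ |v|^r f∞(v) dv is finite if and only if r < μ. -/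
/-!
After discarding the negative half-line and the constant `(μ-1)^μ / Γ(μ)`, the moment is the
integral over `(0, ∞)` of `e^{-a/v} v^s` with `a = μ - 1 > 0` and `s = r - 1 - μ`. Near `0` the
factor `e^{-a/v}` beats every power of `v`, so that end always converges; near `∞` it tends
to `1`, so the integral converges exactly when `∫^∞ v^s dv` does, i.e. when `s < -1`.
-/

open MeasureTheory

open Set

namespace Real

lemma exp_neg_div_le_factorial_div_pow_mul_pow {a v : ℝ} (ha : 0 < a) (hv : 0 < v) (n : ℕ) :
    exp (-a / v) ≤ n.factorial / a ^ n * v ^ n := by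
  calc exp (-a / v) = (exp (a / v))⁻¹ := by rw [neg_div, exp_neg]
    _ ≤ ((a / v) ^ n / n.factorial)⁻¹ := by
      gcongr
      exact pow_div_factorial_le_exp _ (by positivity) n
    _ = n.factorial / a ^ n * v ^ n := by
      rw [div_pow]
      field_simp

lemma integrableOn_Ioc_exp_neg_div_mul_rpow {a : ℝ} (ha : 0 < a) (s : ℝ) :
    IntegrableOn (fun v : ℝ => exp (-a / v) * v ^ s) (Ioc 0 1) := by
  obtain ⟨n, hn⟩ := exists_nat_ge (-s)
  refine Integrable.mono' (g := fun _ => (n.factorial : ℝ) / a ^ n)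
    (integrableOn_const measure_Ioc_lt_top.ne) (by fun_prop) ?_
  filter_upwards [ae_restrict_mem measurableSet_Ioc] with v ⟨hv0, hv1⟩
  rw [norm_of_nonneg (by positivity)]
  calc exp (-a / v) * v ^ s ≤ n.factorial / a ^ n * v ^ n * v ^ s := by
        gcongr
        exact exp_neg_div_le_factorial_div_pow_mul_pow ha hv0 n
    _ = n.factorial / a ^ n * v ^ ((n : ℝ) + s) := by
        rw [mul_assoc, ← rpow_natCast v n, ← rpow_add hv0]
    _ ≤ n.factorial / a ^ n := by
        exact mul_le_of_le_one_right (by positivity) (rpow_le_one hv0.le hv1 (by linarith))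

lemma integrableOn_Ioi_one_exp_neg_div_mul_rpow_iff {a : ℝ} (ha : 0 ≤ a) (s : ℝ) :
    IntegrableOn (fun v : ℝ => exp (-a / v) * v ^ s) (Ioi 1) ↔ s < -1 := by
  rw [← integrableOn_Ioi_rpow_iff zero_lt_one]
  constructor
  · intro h
    -- on `v > 1` we have `e^{-a} ≤ e^{-a/v}`
    refine (h.const_mul (exp a)).mono' (by fun_prop) ?_
    filter_upwards [ae_restrict_mem measurableSet_Ioi] with v (hv : 1 < v)
    have hv0 : 0 < v := zero_lt_one.trans hv
    rw [norm_of_nonneg (by positivity), ← mul_assoc, ← exp_add]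
    refine le_mul_of_one_le_left (by positivity) (one_le_exp ?_)
    rw [neg_div, ← sub_eq_add_neg, sub_nonneg, div_le_iff₀ hv0]
    nlinarith
  · intro h
    refine h.mono' (by fun_prop) ?_
    filter_upwards [ae_restrict_mem measurableSet_Ioi] with v (hv : 1 < v)
    have hv0 : 0 < v := zero_lt_one.trans hv
    rw [norm_of_nonneg (by positivity)]
    refine mul_le_of_le_one_left (by positivity) (exp_le_one_iff.2 ?_)
    exact div_nonpos_of_nonpos_of_nonneg (by linarith) hv0.le

lemma integrableOn_Ioi_exp_neg_div_mul_rpow_iff {a : ℝ} (ha : 0 < a) (s : ℝ) :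
    IntegrableOn (fun v : ℝ => exp (-a / v) * v ^ s) (Ioi 0) ↔ s < -1 := by
  rw [← Ioc_union_Ioi_eq_Ioi zero_le_one, integrableOn_union,
    integrableOn_Ioi_one_exp_neg_div_mul_rpow_iff ha.le]
  exact and_iff_right (integrableOn_Ioc_exp_neg_div_mul_rpow ha s)

end Real

lemma support_fSt_subset (μ : ℝ) : Function.support (fSt μ) ⊆ Ioi 0 := by
  intro v hv
  by_contra h
  exact hv (if_neg h)

lemma abs_rpow_mul_fSt_eqOn (μ r : ℝ) :
    EqOn (fun v : ℝ => |v| ^ r * fSt μ v)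
      (fun v => (μ - 1) ^ μ / Real.Gamma μ * (Real.exp (-(μ - 1) / v) * v ^ (r - (1 + μ))))
      (Ioi 0) := by
  intro v (hv : 0 < v)
  simp only [fSt, if_pos hv, abs_of_pos hv, Real.rpow_sub hv]
  ring

theorem integrable_abs_rpow_mul_fSt_iff {μ : ℝ} (hμ : 1 < μ) (r : ℝ) :
    Integrable (fun v : ℝ => |v| ^ r * fSt μ v) ↔ r < μ := by
  have hC : (μ - 1) ^ μ / Real.Gamma μ ≠ 0 :=
    (div_pos (Real.rpow_pos_of_pos (by linarith) μ) (Real.Gamma_pos_of_pos (by linarith))).ne'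
  have hsupp : Function.support (fun v : ℝ => |v| ^ r * fSt μ v) ⊆ Ioi 0 :=
    (Function.support_mul_subset_right _ _).trans (support_fSt_subset μ)
  rw [← integrableOn_iff_integrable_of_support_subset hsupp,
    integrableOn_congr_fun (abs_rpow_mul_fSt_eqOn μ r) measurableSet_Ioi, IntegrableOn,
    integrable_const_mul_iff hC.isUnit, ← IntegrableOn,
    Real.integrableOn_Ioi_exp_neg_div_mul_rpow_iff (by linarith)]
  constructor <;> intro h <;> linarith

theorem stmt_5 (lam sig : ℝ) (hlam : 0 < lam) (hsig : 0 < sig)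
    (μ : ℝ) (hmu : μ = 1 + 2 * lam / sig) :
    ∀ r : ℝ, 0 ≤ r →
      (Integrable (fun v : ℝ => |v| ^ r * fSt μ v) ↔ r < μ) := by
  have hμ : 1 < μ := by
    rw [hmu]
    linarith [div_pos (mul_pos two_pos hlam) hsig]
  exact fun r _ => integrable_abs_rpow_mul_fSt_iff hμ r
end

section
/- Let f∞ and g be probability densities on ℝ such that g(v) > 0 at almost every point where f∞(v) > 0, and define h(v) = f∞(v)²/g(v) at points where g(v) > 0 and h(v) = 0 elsewhere. Assume h is integrable. Then d_H(h, f∞) ≥ (1/4) ∫_ℝ |g(v) − f∞(v)| dv ≥ (1/4) d_H(g, f∞)², where d_H(p,q) = ( ∫_ℝ (√p(v) − √q(v))² dv )^{1/2}. -/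
/-!
Pointwise, with `X = √(f²/g) - √f`, one has `√g · X = f - √(f g)`, so
`f - g ≤ 2 √g X ≤ s g + X² / s` for every `s > 0` (the first step is `(√f - √g)² ≥ 0`, the
second AM-GM). Integrating the positive part and using `∫ g = 1` gives
`½ ∫ |g - f| = ∫ (f - g)⁺ ≤ s + d_H(h, f)² / s`, and `s = d_H(h, f)` yields the first inequality.
The second one is the pointwise bound `(√g - √f)² ≤ |g - f|`.
-/

open MeasureTheory

namespace Real

lemma sq_sqrt_le_abs (x : ℝ) : √x ^ 2 ≤ |x| := by
  calc √x ^ 2 ≤ √|x| ^ 2 := by gcongr; exact le_abs_self x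
    _ = |x| := sq_sqrt (abs_nonneg x)

lemma sq_sqrt_sub_sqrt_le_abs_sub {a b : ℝ} (ha : 0 ≤ a) (hb : 0 ≤ b) :
    (√a - √b) ^ 2 ≤ |a - b| := by
  wlog hba : b ≤ a generalizing a b
  · rw [sub_sq_comm, abs_sub_comm]
    exact this hb ha (le_of_not_ge hba)
  rw [abs_of_nonneg (sub_nonneg.mpr hba)]
  have hsqrt : √b ≤ √a := sqrt_le_sqrt hba
  nlinarith [sq_sqrt ha, sq_sqrt hb, sqrt_nonneg b]

lemma sub_le_two_mul_sqrt_mul_sqrt_sq_div_sub_sqrt {a b : ℝ} (ha : 0 ≤ a) (hb : 0 < b) :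
    a - b ≤ 2 * √b * (√(a ^ 2 / b) - √a) := by
  have hsb : 0 < √b := sqrt_pos.mpr hb
  have hX : √b * (√(a ^ 2 / b) - √a) = a - √a * √b := by
    rw [sqrt_div (sq_nonneg a), sqrt_sq ha]
    field_simp
  rw [mul_assoc, hX]
  nlinarith [sq_nonneg (√a - √b), sq_sqrt ha, sq_sqrt hb.le]

lemma two_mul_le_mul_add_sq_div {x y s : ℝ} (hs : 0 < s) : 2 * x * y ≤ s * x ^ 2 + y ^ 2 / s := by
  rw [← sub_nonneg]
  have hsq : s * x ^ 2 + y ^ 2 / s - 2 * x * y = (s * x - y) ^ 2 / s := by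
    field_simp
    ring
  rw [hsq]
  positivity

lemma sub_le_mul_add_sq_sqrt_sq_div_sub_sqrt_div {a b s : ℝ} (ha : 0 ≤ a) (hb : 0 ≤ b)
    (hab : 0 < a → 0 < b) (hs : 0 < s) :
    a - b ≤ s * b + (√(a ^ 2 / b) - √a) ^ 2 / s := by
  rcases hb.eq_or_lt with rfl | hb
  · obtain rfl : a = 0 := le_antisymm (not_lt.mp fun h => lt_irrefl 0 (hab h)) ha
    simp
  calc a - b ≤ 2 * √b * (√(a ^ 2 / b) - √a) := sub_le_two_mul_sqrt_mul_sqrt_sq_div_sub_sqrt ha hb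
    _ ≤ s * √b ^ 2 + (√(a ^ 2 / b) - √a) ^ 2 / s := two_mul_le_mul_add_sq_div hs
    _ = s * b + (√(a ^ 2 / b) - √a) ^ 2 / s := by rw [sq_sqrt hb.le]

lemma le_two_mul_sqrt_of_forall_le_add_div {c E : ℝ} (hE : 0 ≤ E)
    (h : ∀ s, 0 < s → c ≤ s + E / s) : c ≤ 2 * √E := by
  rcases hE.eq_or_lt with rfl | hE
  · simpa using le_of_forall_pos_le_add fun s hs => by simpa using h s hs
  have hsE : 0 < √E := sqrt_pos.mpr hE
  simpa [div_sqrt, two_mul] using h √E hsE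

end Real

section Integral

variable {α : Type*} [MeasurableSpace α] {μ : Measure α} {f g : α → ℝ}

lemma integrable_sq_sqrt_sub_sqrt (hf : Integrable f μ) (hg : Integrable g μ) :
    Integrable (fun v => (√(f v) - √(g v)) ^ 2) μ := by
  have hmeas : AEStronglyMeasurable (fun v => (√(f v) - √(g v)) ^ 2) μ :=
    ((Real.continuous_sqrt.comp_aestronglyMeasurable hf.1).sub
      (Real.continuous_sqrt.comp_aestronglyMeasurable hg.1)).pow 2
  refine ((hf.abs.add hg.abs).const_mul 2).mono' hmeas (ae_of_all _ fun v => ?_)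
  rw [Real.norm_eq_abs, abs_of_nonneg (sq_nonneg _), Pi.add_apply]
  nlinarith [Real.sq_sqrt_le_abs (f v), Real.sq_sqrt_le_abs (g v),
    sq_nonneg (√(f v) + √(g v))]

lemma integral_max_sub_zero_eq_half_integral_abs_sub (hf : Integrable f μ) (hg : Integrable g μ)
    (hfg : ∫ v, f v ∂μ = ∫ v, g v ∂μ) :
    ∫ v, max (f v - g v) 0 ∂μ = 1 / 2 * ∫ v, |g v - f v| ∂μ := by
  have hmax : ∀ v, max (f v - g v) 0 = 1 / 2 * ((f v - g v) + |g v - f v|) := by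
    intro v
    rw [abs_sub_comm]
    rcases le_total (f v) (g v) with h | h
    · rw [max_eq_right (by linarith), abs_of_nonpos (by linarith)]; ring
    · rw [max_eq_left (by linarith), abs_of_nonneg (by linarith)]; ring
  have hsub : Integrable (fun v => f v - g v) μ := hf.sub hg
  have habs : Integrable (fun v => |g v - f v|) μ := (hg.sub hf).abs
  simp_rw [hmax]
  rw [integral_const_mul, integral_add hsub habs, integral_sub hf hg, hfg,
    sub_self, zero_add]

lemma integral_max_sub_zero_le (hf : Integrable f μ) (hg : Integrable g μ)
    (hh : Integrable (fun v => f v ^ 2 / g v) μ) (hf0 : 0 ≤ᵐ[μ] f) (hg0 : 0 ≤ᵐ[μ] g)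
    (hpos : ∀ᵐ v ∂μ, 0 < f v → 0 < g v) {s : ℝ} (hs : 0 < s) :
    ∫ v, max (f v - g v) 0 ∂μ ≤
      s * ∫ v, g v ∂μ + (∫ v, (√(f v ^ 2 / g v) - √(f v)) ^ 2 ∂μ) / s := by
  have hS := integrable_sq_sqrt_sub_sqrt hh hf
  rw [← integral_const_mul, ← integral_div, ← integral_add (hg.const_mul s) (hS.div_const s)]
  refine integral_mono_of_nonneg (ae_of_all _ fun v => le_max_right _ _)
    ((hg.const_mul s).add (hS.div_const s)) ?_
  filter_upwards [hf0, hg0, hpos] with v (hfv : 0 ≤ f v) (hgv : 0 ≤ g v) hv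
  exact max_le (Real.sub_le_mul_add_sq_sqrt_sq_div_sub_sqrt_div hfv hgv hv hs) (by positivity)

end Integral

theorem stmt_16_general (fInf g : ℝ → ℝ)
    (hfI0 : ∀ v, 0 ≤ fInf v) (hg0 : ∀ v, 0 ≤ g v)
    (hfIi : Integrable fInf) (hgi : Integrable g)
    (hfI1 : (∫ v, fInf v) = 1) (hg1 : (∫ v, g v) = 1)
    (hpos : ∀ᵐ v : ℝ, 0 < fInf v → 0 < g v)
    -- `h v = fInf v ^ 2 / g v`; note that in Lean division by zero gives `0`,
    -- so `h v = 0` whenever `g v = 0`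
    (hh : Integrable fun v => fInf v ^ 2 / g v) :
    1 / 4 * (∫ v, |g v - fInf v|) ≤
        Real.sqrt (∫ v, (Real.sqrt (fInf v ^ 2 / g v) - Real.sqrt (fInf v)) ^ 2) ∧
      1 / 4 * (∫ v, (Real.sqrt (g v) - Real.sqrt (fInf v)) ^ 2) ≤
        1 / 4 * ∫ v, |g v - fInf v| := by
  constructor
  · have hhalf : 1 / 2 * ∫ v, |g v - fInf v| ≤
        2 * Real.sqrt (∫ v, (Real.sqrt (fInf v ^ 2 / g v) - Real.sqrt (fInf v)) ^ 2) := by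
      refine Real.le_two_mul_sqrt_of_forall_le_add_div (integral_nonneg fun v => sq_nonneg _)
        fun s hs => ?_
      rw [← integral_max_sub_zero_eq_half_integral_abs_sub hfIi hgi (hfI1.trans hg1.symm)]
      simpa [hg1] using integral_max_sub_zero_le hfIi hgi hh (ae_of_all _ hfI0)
        (ae_of_all _ hg0) hpos hs
    linarith
  · refine mul_le_mul_of_nonneg_left ?_ (by norm_num)
    exact integral_mono (integrable_sq_sqrt_sub_sqrt hgi hfIi) (hgi.sub hfIi).abs
      fun v => Real.sq_sqrt_sub_sqrt_le_abs_sub (hg0 v) (hfI0 v)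

theorem stmt_16 (fInf g : ℝ → ℝ) (hfIm : Measurable fInf) (hgm : Measurable g)
    (hfI0 : ∀ v, 0 ≤ fInf v) (hg0 : ∀ v, 0 ≤ g v)
    (hfIi : Integrable fInf) (hgi : Integrable g)
    (hfI1 : (∫ v, fInf v) = 1) (hg1 : (∫ v, g v) = 1)
    (hpos : ∀ᵐ v : ℝ, 0 < fInf v → 0 < g v)
    -- `h v = fInf v ^ 2 / g v`; note that in Lean division by zero gives `0`,
    -- so `h v = 0` whenever `g v = 0`
    (hh : Integrable fun v => fInf v ^ 2 / g v) :
    1 / 4 * (∫ v, |g v - fInf v|) ≤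
        Real.sqrt (∫ v, (Real.sqrt (fInf v ^ 2 / g v) - Real.sqrt (fInf v)) ^ 2) ∧
      1 / 4 * (∫ v, (Real.sqrt (g v) - Real.sqrt (fInf v)) ^ 2) ≤
        1 / 4 * ∫ v, |g v - fInf v| :=
  stmt_16_general fInf g hfI0 hg0 hfIi hgi hfI1 hg1 hpos hh
end

section
/- Let 0 < α < 1, and let f and g be probability densities on ℝ. Then (1−α) ∫_ℝ |f(v) − g(v)| dv ≤ 2 · d_{H,α}(f,g), where d_{H,α}(f,g) = d_H(f, α f + (1−α) g) and d_H(p,q) = ( ∫_ℝ (√p(v) − √q(v))² dv )^{1/2}. -/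
/-!
With `q = α f + (1 - α) g` one has `f - q = (1 - α) (f - g)`, so it suffices to bound the
`L¹` distance of two densities by twice their Hellinger distance. Factor
`|p - q| = |√p - √q| (√p + √q)` and apply Cauchy–Schwarz; the second factor satisfies
`∫ (√p + √q)² ≤ 2 (∫ p + ∫ q) = 4`.
-/

lemma abs_sub_eq_abs_sqrt_sub_mul_sqrt_add {a b : ℝ} (ha : 0 ≤ a) (hb : 0 ≤ b) :
    |a - b| = |√a - √b| * (√a + √b) := by
  have hfactor : a - b = (√a - √b) * (√a + √b) := by
    rw [mul_comm, ← sq_sub_sq, Real.sq_sqrt ha, Real.sq_sqrt hb]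
  rw [hfactor, abs_mul, abs_of_nonneg (by positivity : 0 ≤ √a + √b)]

namespace MeasureTheory

variable {X : Type*} [MeasurableSpace X] {μ : Measure X}

lemma Integrable.memLp_two_sqrt {p : X → ℝ} (hp : 0 ≤ᵐ[μ] p) (hpi : Integrable p μ) :
    MemLp (fun x => √(p x)) 2 μ := by
  rw [memLp_two_iff_integrable_sq
    (Real.continuous_sqrt.comp_aestronglyMeasurable hpi.aestronglyMeasurable)]
  refine hpi.congr ?_
  filter_upwards [hp] with x hx using (Real.sq_sqrt hx).symm

lemma integral_mul_le_sqrt_integral_sq_mul_sqrt_integral_sq {u w : X → ℝ}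
    (hu : 0 ≤ᵐ[μ] u) (hw : 0 ≤ᵐ[μ] w) (huL : MemLp u 2 μ) (hwL : MemLp w 2 μ) :
    ∫ x, u x * w x ∂μ ≤ √(∫ x, u x ^ 2 ∂μ) * √(∫ x, w x ^ 2 ∂μ) := by
  have h2 : ENNReal.ofReal 2 = 2 := by norm_num
  have hHolder := integral_mul_le_Lp_mul_Lq_of_nonneg (p := 2) (q := 2) (μ := μ)
    Real.HolderConjugate.two_two hu hw (h2 ▸ huL) (h2 ▸ hwL)
  simpa only [Real.rpow_two, ← Real.sqrt_eq_rpow] using hHolder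

theorem integral_abs_sub_le_sqrt_mul_sqrt {p q : X → ℝ} (hp : 0 ≤ᵐ[μ] p) (hq : 0 ≤ᵐ[μ] q)
    (hpi : Integrable p μ) (hqi : Integrable q μ) :
    ∫ x, |p x - q x| ∂μ ≤
      √(∫ x, (√(p x) - √(q x)) ^ 2 ∂μ) * √(2 * ((∫ x, p x ∂μ) + ∫ x, q x ∂μ)) := by
  have hpL := hpi.memLp_two_sqrt hp
  have hqL := hqi.memLp_two_sqrt hq
  have hsumL : MemLp (fun x => √(p x) + √(q x)) 2 μ := hpL.add hqL
  have hsum_sq : Integrable (fun x => (√(p x) + √(q x)) ^ 2) μ :=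
    (memLp_two_iff_integrable_sq hsumL.aestronglyMeasurable).1 hsumL
  have hfactor : ∫ x, |p x - q x| ∂μ = ∫ x, |√(p x) - √(q x)| * (√(p x) + √(q x)) ∂μ := by
    refine integral_congr_ae ?_
    filter_upwards [hp, hq] with x hpx hqx
    exact abs_sub_eq_abs_sqrt_sub_mul_sqrt_add hpx hqx
  have hsum_sq_le : ∫ x, (√(p x) + √(q x)) ^ 2 ∂μ ≤ 2 * ((∫ x, p x ∂μ) + ∫ x, q x ∂μ) := by
    rw [← integral_add hpi hqi, ← integral_const_mul]
    refine integral_mono_ae hsum_sq ((hpi.add hqi).const_mul 2) ?_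
    filter_upwards [hp, hq] with x hpx hqx
    simpa only [Real.sq_sqrt hpx, Real.sq_sqrt hqx] using add_sq_le (a := √(p x)) (b := √(q x))
  calc ∫ x, |p x - q x| ∂μ
      = ∫ x, |√(p x) - √(q x)| * (√(p x) + √(q x)) ∂μ := hfactor
    _ ≤ √(∫ x, |√(p x) - √(q x)| ^ 2 ∂μ) * √(∫ x, (√(p x) + √(q x)) ^ 2 ∂μ) :=
        integral_mul_le_sqrt_integral_sq_mul_sqrt_integral_sq
          (ae_of_all _ fun _ => abs_nonneg _) (ae_of_all _ fun _ => by positivity)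
          (hpL.sub hqL).abs hsumL
    _ ≤ √(∫ x, (√(p x) - √(q x)) ^ 2 ∂μ) * √(2 * ((∫ x, p x ∂μ) + ∫ x, q x ∂μ)) := by
        simp only [sq_abs]
        gcongr

end MeasureTheory

open MeasureTheory

theorem stmt_17_general (α : ℝ) (hα0 : 0 < α) (hα1 : α < 1)
    (f g : ℝ → ℝ)
    (hf0 : ∀ v, 0 ≤ f v) (hg0 : ∀ v, 0 ≤ g v)
    (hfi : Integrable f) (hgi : Integrable g)
    (hf1 : (∫ v, f v) = 1) (hg1 : (∫ v, g v) = 1) :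
    (1 - α) * (∫ v, |f v - g v|) ≤
      2 * Real.sqrt
        (∫ v, (Real.sqrt (f v) - Real.sqrt (α * f v + (1 - α) * g v)) ^ 2) := by
  set q : ℝ → ℝ := fun v => α * f v + (1 - α) * g v
  have hq0 : ∀ v, 0 ≤ q v := fun v => by have := hf0 v; have := hg0 v; nlinarith
  have hqi : Integrable q := (hfi.const_mul α).add (hgi.const_mul (1 - α))
  have hq1 : ∫ v, q v = 1 := by
    rw [integral_add (hfi.const_mul α) (hgi.const_mul (1 - α)), integral_const_mul,
      integral_const_mul, hf1, hg1]
    ring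
  have hdiff : ∫ v, |f v - q v| = (1 - α) * ∫ v, |f v - g v| := by
    rw [← integral_const_mul]
    congr 1 with v
    rw [show f v - q v = (1 - α) * (f v - g v) by ring, abs_mul, abs_of_pos (by linarith)]
  have hbound := integral_abs_sub_le_sqrt_mul_sqrt (ae_of_all _ hf0) (ae_of_all _ hq0) hfi hqi
  rw [hdiff, hf1, hq1, show √(2 * (1 + 1) : ℝ) = 2 by norm_num [show (4 : ℝ) = 2 ^ 2 by norm_num]]
    at hbound
  linarith

theorem stmt_17 (α : ℝ) (hα0 : 0 < α) (hα1 : α < 1)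
    (f g : ℝ → ℝ) (hfm : Measurable f) (hgm : Measurable g)
    (hf0 : ∀ v, 0 ≤ f v) (hg0 : ∀ v, 0 ≤ g v)
    (hfi : Integrable f) (hgi : Integrable g)
    (hf1 : (∫ v, f v) = 1) (hg1 : (∫ v, g v) = 1) :
    (1 - α) * (∫ v, |f v - g v|) ≤
      2 * Real.sqrt
        (∫ v, (Real.sqrt (f v) - Real.sqrt (α * f v + (1 - α) * g v)) ^ 2) :=
  stmt_17_general α hα0 hα1 f g hf0 hg0 hfi hgi hf1 hg1
end

section
/- Let 0 < α < 1, and let f, f∞ : (0,∞) → (0,∞) be differentiable functions. Set g = α f + (1−α) f∞ on (0,∞). Then for every v > 0, f(v) · ( f'(v)/f(v) − g'(v)/g(v) )² ≥ 4 ((1−α)²/α) · f∞(v) · ( (d/dv) √(f∞/g) (v) )². In particular, multiplying by v² and integrating, ∫_0^∞ v² f(v) ( (d/dv) log(f/g)(v) )² dv ≥ 4 ((1−α)²/α) ∫_0^∞ v² f∞(v) ( (d/dv) √(f∞/g)(v) )² dv. -/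
/-!
With `g = α f + (1 - α) f∞` and the Wronskian `W = f' f∞ - f f∞'`, both sides are explicit:
`f (f'/f - g'/g)² = (1 - α)² W² / (f g²)`, because `f' g - f g' = (1 - α) W`, and
`4 f∞ ((√(f∞/g))')² = g ((f∞/g)')² = α² W² / g³`, because `f∞' g - f∞ g' = -α W`.
Their ratio is `α f / g ≤ 1`, since `(1 - α) f∞ ≥ 0`.
-/

open MeasureTheory

theorem Real.deriv_log_div {f g : ℝ → ℝ} {v : ℝ} (hf : DifferentiableAt ℝ f v)
    (hg : DifferentiableAt ℝ g v) (hfv : 0 < f v) (hgv : 0 < g v) :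
    deriv (fun x => Real.log (f x / g x)) v = deriv f v / f v - deriv g v / g v := by
  rw [deriv.log (hf.fun_div hg hgv.ne') (div_pos hfv hgv).ne', deriv_fun_div hf hg hgv.ne']
  field_simp

theorem Real.deriv_sqrt_div {f g : ℝ → ℝ} {v : ℝ} (hf : DifferentiableAt ℝ f v)
    (hg : DifferentiableAt ℝ g v) (hfv : 0 < f v) (hgv : 0 < g v) :
    deriv (fun x => √(f x / g x)) v =
      (deriv f v * g v - f v * deriv g v) / g v ^ 2 / (2 * √(f v / g v)) := by
  rw [deriv_sqrt (hf.fun_div hg hgv.ne') (div_pos hfv hgv).ne', deriv_fun_div hf hg hgv.ne']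

theorem Real.div_two_sqrt_sq {q : ℝ} (q' : ℝ) (hq : 0 < q) :
    (q' / (2 * √q)) ^ 2 = q' ^ 2 / (4 * q) := by
  rw [div_pow, mul_pow, Real.sq_sqrt hq.le]
  norm_num

section Mixture

variable {α a b a' b' : ℝ}

theorem div_sub_mixture_div (ha : a ≠ 0) (hg : α * a + (1 - α) * b ≠ 0) :
    a' / a - (α * a' + (1 - α) * b') / (α * a + (1 - α) * b) =
      (1 - α) * (a' * b - a * b') / (a * (α * a + (1 - α) * b)) := by
  rw [div_sub_div _ _ ha hg]
  ring

theorem mixture_fisher_le (hα0 : 0 < α) (hα1 : α < 1) (ha : 0 < a) (hb : 0 < b) :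
    4 * ((1 - α) ^ 2 / α) * b *
        (((b' * (α * a + (1 - α) * b) - b * (α * a' + (1 - α) * b')) /
          (α * a + (1 - α) * b) ^ 2) / (2 * √(b / (α * a + (1 - α) * b)))) ^ 2 ≤
      a * (a' / a - (α * a' + (1 - α) * b') / (α * a + (1 - α) * b)) ^ 2 := by
  set g := α * a + (1 - α) * b
  set W := a' * b - a * b'
  have hg : 0 < g := by nlinarith
  have hαa : α * a ≤ g := by nlinarith
  have hnum : b' * g - b * (α * a' + (1 - α) * b') = -(α * W) := by ring
  have hlhs : 4 * ((1 - α) ^ 2 / α) * b *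
      ((-(α * W) / g ^ 2) / (2 * √(b / g))) ^ 2 = (1 - α) ^ 2 * W ^ 2 / g ^ 2 * (α / g) := by
    rw [Real.div_two_sqrt_sq _ (div_pos hb hg)]
    field_simp
  have hrhs : a * ((1 - α) * W / (a * g)) ^ 2 = (1 - α) ^ 2 * W ^ 2 / g ^ 2 * (1 / a) := by
    field_simp
  rw [hnum, div_sub_mixture_div ha.ne' hg.ne', hlhs, hrhs]
  refine mul_le_mul_of_nonneg_left ?_ (by positivity)
  rwa [div_le_div_iff₀ hg ha, one_mul]

end Mixture

theorem mixture_fisher_le_deriv {α : ℝ} (hα0 : 0 < α) (hα1 : α < 1) {f fInf : ℝ → ℝ} {v : ℝ}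
    (hf : DifferentiableAt ℝ f v) (hfInf : DifferentiableAt ℝ fInf v)
    (hfv : 0 < f v) (hfInfv : 0 < fInf v) :
    4 * ((1 - α) ^ 2 / α) * fInf v *
        deriv (fun x => √(fInf x / (α * f x + (1 - α) * fInf x))) v ^ 2 ≤
      f v * (deriv f v / f v -
        deriv (fun x => α * f x + (1 - α) * fInf x) v / (α * f v + (1 - α) * fInf v)) ^ 2 := by
  have hg : DifferentiableAt ℝ (fun x => α * f x + (1 - α) * fInf x) v :=
    (hf.const_mul α).add (hfInf.const_mul (1 - α))
  have hgv : 0 < α * f v + (1 - α) * fInf v := by nlinarith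
  have hg' : deriv (fun x => α * f x + (1 - α) * fInf x) v =
      α * deriv f v + (1 - α) * deriv fInf v := by
    rw [deriv_fun_add (hf.const_mul α) (hfInf.const_mul (1 - α)),
      deriv_const_mul α hf, deriv_const_mul (1 - α) hfInf]
  rw [Real.deriv_sqrt_div hfInf hg hfInfv hgv, hg']
  exact mixture_fisher_le hα0 hα1 hfv hfInfv

theorem stmt_19 (α : ℝ) (hα0 : 0 < α) (hα1 : α < 1)
    (f fInf : ℝ → ℝ)
    (hfpos : ∀ v ∈ Set.Ioi (0 : ℝ), 0 < f v)
    (hfIpos : ∀ v ∈ Set.Ioi (0 : ℝ), 0 < fInf v)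
    (hfd : ∀ v ∈ Set.Ioi (0 : ℝ), DifferentiableAt ℝ f v)
    (hfId : ∀ v ∈ Set.Ioi (0 : ℝ), DifferentiableAt ℝ fInf v) :
    -- with `g = α f + (1-α) f∞`,
    -- pointwise inequality on `(0, ∞)`:
    (∀ v ∈ Set.Ioi (0 : ℝ),
      4 * ((1 - α) ^ 2 / α) * fInf v *
          (deriv (fun x => Real.sqrt (fInf x / (α * f x + (1 - α) * fInf x))) v) ^ 2 ≤
        f v * (deriv f v / f v -
          deriv (fun x => α * f x + (1 - α) * fInf x) v /
            (α * f v + (1 - α) * fInf v)) ^ 2) ∧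
    -- integrated inequality (multiplying by `v²` and integrating over `(0, ∞)`):
    (∫⁻ v in Set.Ioi (0 : ℝ), ENNReal.ofReal
        (4 * ((1 - α) ^ 2 / α) * (v ^ 2 * fInf v *
          (deriv (fun x => Real.sqrt (fInf x / (α * f x + (1 - α) * fInf x))) v) ^ 2))) ≤
      ∫⁻ v in Set.Ioi (0 : ℝ), ENNReal.ofReal
        (v ^ 2 * f v *
          (deriv (fun x => Real.log (f x / (α * f x + (1 - α) * fInf x))) v) ^ 2) := by
  have pointwise : ∀ v ∈ Set.Ioi (0 : ℝ), _ := fun v hv =>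
    mixture_fisher_le_deriv hα0 hα1 (hfd v hv) (hfId v hv) (hfpos v hv) (hfIpos v hv)
  refine ⟨pointwise, setLIntegral_mono' measurableSet_Ioi fun v hv => ?_⟩
  have hg : DifferentiableAt ℝ (fun x => α * f x + (1 - α) * fInf x) v :=
    ((hfd v hv).const_mul α).add ((hfId v hv).const_mul (1 - α))
  have hgv : 0 < α * f v + (1 - α) * fInf v := by nlinarith [hfpos v hv, hfIpos v hv]
  rw [Real.deriv_log_div (hfd v hv) hg (hfpos v hv) hgv]
  refine ENNReal.ofReal_le_ofReal ?_
  calc _ = v ^ 2 * (4 * ((1 - α) ^ 2 / α) * fInf v *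
          deriv (fun x => √(fInf x / (α * f x + (1 - α) * fInf x))) v ^ 2) := by ring
    _ ≤ _ := mul_le_mul_of_nonneg_left (pointwise v hv) (sq_nonneg v)
    _ = _ := by ring
end
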